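/- arXiv:1601.04274 — 3 statements merged into one kernel-verified Lean document; each statement's English description precedes it below -/
import Mathlib

section
/- Let x₀ > 1 be the unique real solution of x - x^{3/4} = 1. If real numbers x, y satisfy x - x^{3/4} < y ≤ x and y ≥ 1, then y ≤ x < y + (x₀ - 1)·y^{3/4}. -/
open Real Set

lemma rpow_sub_rpow_le_sub_of_one_le {p a b : ℝ} (hp₀ : 0 ≤ p) (hp₁ : p ≤ 1)
    (ha : 1 ≤ a) (hab : a ≤ b) : b ^ p - a ^ p ≤ b - a := by
  have ha₀ : 0 < a := one_pos.trans_le ha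
  set s := (b - a) / a with hs
  have hs₀ : 0 ≤ s := div_nonneg (sub_nonneg.2 hab) ha₀.le
  have hb : b = a * (1 + s) := by rw [hs]; field_simp; ring
  have hbernoulli : (1 + s) ^ p ≤ 1 + p * s :=
    rpow_one_add_le_one_add_mul_self (by linarith) hp₀ hp₁
  have hap₀ : 0 ≤ a ^ p := rpow_nonneg ha₀.le p
  have hap : a ^ p ≤ a := by
    simpa using rpow_le_rpow_of_exponent_le ha hp₁
  calc b ^ p - a ^ p = a ^ p * ((1 + s) ^ p - 1) := by
        rw [hb, mul_rpow ha₀.le (by linarith)]; ring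
    _ ≤ a ^ p * (p * s) := by gcongr; linarith
    _ ≤ a * s := by
        gcongr
        calc p * s ≤ 1 * s := by gcongr
          _ = s := one_mul s
    _ = b - a := by rw [hb]; ring

lemma monotoneOn_sub_rpow {p : ℝ} (hp₀ : 0 ≤ p) (hp₁ : p ≤ 1) :
    MonotoneOn (fun t : ℝ => t - t ^ p) (Ici 1) := fun a ha b _ hab => by
  have := rpow_sub_rpow_le_sub_of_one_le hp₀ hp₁ ha hab
  dsimp only
  linarith

theorem stmt_0_general (x₀ : ℝ) (hx₀ : 1 < x₀)
    (hroot : x₀ - x₀ ^ ((3:ℝ)/4) = 1)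
    (x y : ℝ) (h1 : x - x ^ ((3:ℝ)/4) < y) (h2 : y ≤ x) (h3 : 1 ≤ y) :
    y ≤ x ∧ x < y + (x₀ - 1) * y ^ ((3:ℝ)/4) := by
  have hy₀ : 0 ≤ y := zero_le_one.trans h3
  have hx₀y : 1 ≤ x₀ * y := one_le_mul_of_one_le_of_one_le hx₀.le h3
  have hpow : (x₀ * y) ^ ((3:ℝ)/4) = (x₀ - 1) * y ^ ((3:ℝ)/4) := by
    rw [mul_rpow (by linarith) hy₀, ← hroot, sub_sub_cancel]
  have hy_pow : y ^ ((3:ℝ)/4) ≤ y := by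
    simpa using rpow_le_rpow_of_exponent_le h3 (by norm_num : (3:ℝ)/4 ≤ 1)
  -- `t ↦ t - t ^ (3/4)` is increasing on `[1, ∞)` and is `≥ y` at `x₀ * y`, but `< y` at `x`.
  have hx_le : x ≤ x₀ * y := by
    by_contra! hlt
    have hmono := monotoneOn_sub_rpow (p := 3/4) (by norm_num) (by norm_num)
      (mem_Ici.2 hx₀y) (mem_Ici.2 (h3.trans h2)) hlt.le
    simp only [hpow] at hmono
    nlinarith
  have hx_pow : x ^ ((3:ℝ)/4) ≤ (x₀ - 1) * y ^ ((3:ℝ)/4) :=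
    hpow ▸ rpow_le_rpow (by linarith) hx_le (by norm_num)
  exact ⟨h2, by linarith⟩

theorem stmt_0 (x₀ : ℝ) (hx₀ : 1 < x₀)
    (hroot : x₀ - x₀ ^ ((3:ℝ)/4) = 1)
    (huniq : ∀ z : ℝ, 1 < z → z - z ^ ((3:ℝ)/4) = 1 → z = x₀)
    (x y : ℝ) (h1 : x - x ^ ((3:ℝ)/4) < y) (h2 : y ≤ x) (h3 : 1 ≤ y) :
    y ≤ x ∧ x < y + (x₀ - 1) * y ^ ((3:ℝ)/4) :=
  stmt_0_general x₀ hx₀ hroot x y h1 h2 h3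
end

section
/- Let ξ₁, ξ₂, … be i.i.d. strictly positive random variables with partial sums Sₙ and ν(t) = #{k ≥ 0 : S_k ≤ t}. Then for every δ > 0, almost surely n^{-δ} · max_{0 ≤ j ≤ n} (ν(j+1) - ν(j)) → 0 as n → ∞ through the integers. -/
/-!
Put `ρ = E[exp (-ξ₀)]`; positivity of `ξ₀` gives `ρ < 1`, and Chernoff's bound gives
`P(ξ_k + ⋯ + ξ_{k+m-1} ≤ c) ≤ e^c ρ^m` for every block of `m` consecutive summands.
Fix `C` with `ρ^C ≤ e^{-2}` and `c > 0`. By Borel–Cantelli, almost surely for all large `n`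
we have `S_{Cn} > n + 1`, and every block of `⌈c n^δ⌉` consecutive summands starting before
`Cn` has sum `> 1`: the failure probabilities are at most `e^{1-n}` and `C e n ρ^{⌈c n^δ⌉}`,
both summable. On this event, the `S_k` in a window `(j, j + 1]` with `j ≤ n` have indices
below `Cn` and increase by less than `1` in total, so there are at most `⌈c n^δ⌉` of them.
Letting `c ↓ 0` along `1 / (q + 1)` proves the claim.
-/

open MeasureTheory ProbabilityTheory Filter
open scoped ENNReal

noncomputable def partialSum {Ω : Type*} (ξ : ℕ → Ω → ℝ) (n : ℕ) (ω : Ω) : ℝ :=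
  ∑ i ∈ Finset.range n, ξ i ω

/-- `ν(j+1) - ν(j) = #{k ≥ 0 : j < S_k ≤ j+1}`, as an `ℝ≥0∞`-valued count. -/
noncomputable def renewalIncr {Ω : Type*} (ξ : ℕ → Ω → ℝ) (j : ℕ) (ω : Ω) : ℝ≥0∞ :=
  ∑' k : ℕ, if (j : ℝ) < partialSum ξ k ω ∧ partialSum ξ k ω ≤ (j : ℝ) + 1
    then (1 : ℝ≥0∞) else 0

open Real Finset Nat

lemma summable_natCast_mul_exp_neg_mul_rpow {b δ : ℝ} (hb : 0 < b) (hδ : 0 < δ) :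
    Summable fun n : ℕ => (n : ℝ) * exp (-(b * (n : ℝ) ^ δ)) := by
  obtain ⟨k, hk⟩ := exists_nat_ge (3 / δ)
  have hbound (n : ℕ) : (n : ℝ) * exp (-(b * (n : ℝ) ^ δ)) ≤ k ! / b ^ k * ((n : ℝ) ^ 2)⁻¹ := by
    rcases n.eq_zero_or_pos with rfl | hn
    · simp -- both sides vanish, the right one because `0⁻¹ = 0`
    have hn1 : (1 : ℝ) ≤ n := by exact_mod_cast hn
    have hcube : (n : ℝ) ^ 3 ≤ ((n : ℝ) ^ δ) ^ k := by
      rw [← rpow_mul_natCast (by positivity), ← rpow_natCast]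
      exact rpow_le_rpow_of_exponent_le hn1
        (by rw [div_le_iff₀ hδ] at hk; push_cast; linarith)
    have hexp : b ^ k * (n : ℝ) ^ 3 / k ! ≤ exp (b * (n : ℝ) ^ δ) :=
      calc b ^ k * (n : ℝ) ^ 3 / k ! ≤ (b * (n : ℝ) ^ δ) ^ k / k ! := by rw [mul_pow]; gcongr
        _ ≤ exp (b * (n : ℝ) ^ δ) := pow_div_factorial_le_exp _ (by positivity) k
    calc (n : ℝ) * exp (-(b * (n : ℝ) ^ δ)) = n / exp (b * (n : ℝ) ^ δ) := by
          rw [exp_neg, div_eq_mul_inv]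
      _ ≤ n / (b ^ k * (n : ℝ) ^ 3 / k !) := by gcongr
      _ = k ! / b ^ k * ((n : ℝ) ^ 2)⁻¹ := by field_simp
  exact .of_nonneg_of_le (fun n => by positivity) hbound
    ((summable_nat_pow_inv.2 one_lt_two).mul_left _)

lemma summable_natCast_mul_pow_ceil_mul_rpow {ρ c δ : ℝ} (hρ0 : 0 < ρ) (hρ1 : ρ < 1)
    (hc : 0 < c) (hδ : 0 < δ) :
    Summable fun n : ℕ => (n : ℝ) * ρ ^ ⌈c * (n : ℝ) ^ δ⌉₊ := by
  have hb : 0 < -log ρ * c := mul_pos (neg_pos.2 (log_neg hρ0 hρ1)) hc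
  refine .of_nonneg_of_le (fun n => by positivity) (fun n => ?_)
    (summable_natCast_mul_exp_neg_mul_rpow hb hδ)
  gcongr
  calc ρ ^ ⌈c * (n : ℝ) ^ δ⌉₊ = ρ ^ (⌈c * (n : ℝ) ^ δ⌉₊ : ℝ) := (rpow_natCast _ _).symm
    _ ≤ ρ ^ (c * (n : ℝ) ^ δ) := rpow_le_rpow_of_exponent_ge hρ0 hρ1.le (le_ceil _)
    _ = exp (-(-log ρ * c * (n : ℝ) ^ δ)) := by rw [rpow_def_of_pos hρ0]; ring_nf

lemma tendsto_rpow_neg_mul_of_eventually_le_ceil {f : ℕ → ℝ} {δ : ℝ} (hδ : 0 < δ)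
    (hf0 : ∀ n, 0 ≤ f n) (hf : ∀ q : ℕ, ∀ᶠ n in atTop, f n ≤ ⌈1 / (q + 1) * (n : ℝ) ^ δ⌉₊) :
    Tendsto (fun n : ℕ => (n : ℝ) ^ (-δ) * f n) atTop (nhds 0) := by
  have hdecay : Tendsto (fun n : ℕ => (n : ℝ) ^ (-δ)) atTop (nhds 0) :=
    (tendsto_rpow_neg_atTop hδ).comp tendsto_natCast_atTop_atTop
  refine tendsto_order.2
    ⟨fun a ha => .of_forall fun n => ha.trans_le (mul_nonneg (by positivity) (hf0 n)),
      fun ε hε => ?_⟩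
  obtain ⟨q, hq⟩ := exists_nat_one_div_lt (half_pos hε)
  filter_upwards [hf q, hdecay.eventually (gt_mem_nhds (half_pos hε)), eventually_gt_atTop 0]
    with n hfn hsmall hn
  have hn' : (0 : ℝ) < n := by exact_mod_cast hn
  calc (n : ℝ) ^ (-δ) * f n ≤ (n : ℝ) ^ (-δ) * (1 / (q + 1) * (n : ℝ) ^ δ + 1) := by
        gcongr
        exact hfn.trans (ceil_lt_add_one (by positivity)).le
    _ = 1 / (q + 1) + (n : ℝ) ^ (-δ) := by
        rw [mul_add, mul_one, mul_left_comm, ← rpow_add hn', neg_add_cancel, rpow_zero, mul_one]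
    _ < ε := by linarith

lemma ae_eventually_notMem_of_measureReal_le {Ω : Type*} [MeasurableSpace Ω] {μ : Measure Ω}
    [IsFiniteMeasure μ] {s : ℕ → Set Ω} {a : ℕ → ℝ} (ha : Summable a)
    (hs : ∀ n, μ.real (s n) ≤ a n) : ∀ᵐ ω ∂μ, ∀ᶠ n in atTop, ω ∉ s n := by
  refine ae_eventually_notMem (ne_top_of_le_ne_top (ENNReal.ofReal_ne_top (r := ∑' n, a n)) ?_)
  rw [ENNReal.ofReal_tsum_of_nonneg (fun n => measureReal_nonneg.trans (hs n)) ha]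
  exact ENNReal.tsum_le_tsum fun n =>
    (ofReal_measureReal (μ := μ) (s := s n)).symm.trans_le (ENNReal.ofReal_le_ofReal (hs n))

lemma integrable_exp_mul_of_nonpos {Ω : Type*} [MeasurableSpace Ω] {μ : Measure Ω}
    [IsFiniteMeasure μ] {X : Ω → ℝ} (hX : AEMeasurable X μ) (hX0 : ∀ᵐ ω ∂μ, 0 ≤ X ω)
    {t : ℝ} (ht : t ≤ 0) : Integrable (fun ω => exp (t * X ω)) μ := by
  refine .of_bound (by fun_prop) 1 ?_
  filter_upwards [hX0] with ω hω
  rw [norm_of_nonneg (exp_pos _).le, exp_le_one_iff]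
  exact mul_nonpos_of_nonpos_of_nonneg ht hω

lemma mgf_lt_one {Ω : Type*} [MeasurableSpace Ω] {μ : Measure Ω} [IsProbabilityMeasure μ]
    {X : Ω → ℝ} (hX : AEMeasurable X μ) (hX0 : ∀ᵐ ω ∂μ, 0 < X ω) {t : ℝ} (ht : t < 0) :
    mgf X μ t < 1 := by
  have hint := integrable_exp_mul_of_nonpos hX (hX0.mono fun _ h => h.le) ht.le
  have hgap : ∀ᵐ ω ∂μ, 0 < 1 - exp (t * X ω) := hX0.mono fun ω hω => by
    simpa using mul_neg_of_neg_of_pos ht hω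
  have hpos : 0 < ∫ ω, (1 - exp (t * X ω)) ∂μ := by
    refine (integral_pos_iff_support_of_nonneg_ae (hgap.mono fun _ h => h.le)
      ((integrable_const 1).sub hint)).2 (pos_iff_ne_zero.2 fun h0 => ?_)
    obtain ⟨ω, hzero, hpos⟩ := ((ae_iff.2 h0).and hgap).exists
    exact hpos.ne' hzero
  rw [integral_sub (integrable_const 1) hint, integral_const, probReal_univ, one_smul] at hpos
  simp only [mgf]
  linarith

section Deterministic

variable {Ω : Type*} {ξ : ℕ → Ω → ℝ} {ω : Ω}

lemma strictMono_partialSum (hpos : ∀ i, 0 < ξ i ω) : StrictMono fun k => partialSum ξ k ω :=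
  strictMono_nat_of_lt_succ fun k => by
    simpa [partialSum, sum_range_succ] using hpos k

lemma renewalIncr_eq_encard (j : ℕ) (ω : Ω) : renewalIncr ξ j ω =
    {k | (j : ℝ) < partialSum ξ k ω ∧ partialSum ξ k ω ≤ (j : ℝ) + 1}.encard := by
  rw [← ENNReal.tsum_set_one, _root_.tsum_subtype _ fun _ => 1]
  simp only [renewalIncr, Set.indicator_apply, Set.mem_ofPred_eq]

lemma renewalIncr_le_of_one_lt_sum_Ico (hpos : ∀ i, 0 < ξ i ω) {j M m : ℕ}
    (hM : (j : ℝ) + 1 < partialSum ξ M ω) (hblock : ∀ k < M, 1 < ∑ i ∈ Ico k (k + m), ξ i ω) :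
    renewalIncr ξ j ω ≤ m := by
  classical
  rw [renewalIncr_eq_encard]
  set P : ℕ → Prop := fun k => (j : ℝ) < partialSum ξ k ω ∧ partialSum ξ k ω ≤ (j : ℝ) + 1
  by_cases hex : ∃ k, P k
  swap
  · simp [P, not_exists.1 hex]
  have hmono := strictMono_partialSum hpos
  set k₀ := Nat.find hex
  have hk₀ : P k₀ := Nat.find_spec hex
  have hk₀M : k₀ < M := hmono.lt_iff_lt.1 (hk₀.2.trans_lt hM)
  have hsub : {k | P k} ⊆ ↑(Ico k₀ (k₀ + m)) := by
    intro k hk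
    refine mem_Ico.2 ⟨Nat.find_min' hex hk, lt_of_not_ge fun hk' => (hblock k₀ hk₀M).not_ge ?_⟩
    calc ∑ i ∈ Ico k₀ (k₀ + m), ξ i ω ≤ ∑ i ∈ Ico k₀ k, ξ i ω :=
          sum_le_sum_of_subset_of_nonneg (Ico_subset_Ico_right hk') fun i _ _ => (hpos i).le
      _ = partialSum ξ k ω - partialSum ξ k₀ ω := sum_Ico_eq_sub _ (by omega)
      _ ≤ 1 := by linarith [hk.2, hk₀.1]
  have hcard : {k | P k}.encard ≤ m :=
    (Set.encard_le_encard hsub).trans_eq (by rw [Set.encard_coe_eq_coe_finsetCard]; simp)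
  exact_mod_cast hcard

end Deterministic

section IID

variable {Ω : Type*} [MeasurableSpace Ω] {μ : Measure Ω} [IsProbabilityMeasure μ]
  {ξ : ℕ → Ω → ℝ}

lemma measureReal_sum_le_le_exp_mul_mgf_pow (hmeas : ∀ i, Measurable (ξ i))
    (hindep : iIndepFun ξ μ) (hid : ∀ i, IdentDistrib (ξ i) (ξ 0) μ μ)
    (hint : Integrable (fun ω => exp (-1 * ξ 0 ω)) μ) (F : Finset ℕ) (c : ℝ) :
    μ.real {ω | ∑ i ∈ F, ξ i ω ≤ c} ≤ exp c * mgf (ξ 0) μ (-1) ^ #F := by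
  have hint' (i : ℕ) : Integrable (fun ω => exp (-1 * ξ i ω)) μ :=
    ((hid i).comp (by fun_prop : Measurable fun x : ℝ => exp (-1 * x))).integrable_iff.2 hint
  have h := measure_le_le_exp_mul_mgf c (by norm_num : (-1 : ℝ) ≤ 0)
    (hindep.integrable_exp_mul_sum hmeas (s := F) fun i _ => hint' i)
  simpa only [Finset.sum_apply, neg_neg, one_mul, hindep.mgf_sum hmeas,
    fun i => mgf_congr_identDistrib (hid i), prod_const] using h

lemma ae_eventually_lt_partialSum (hmeas : ∀ i, Measurable (ξ i))
    (hindep : iIndepFun ξ μ) (hid : ∀ i, IdentDistrib (ξ i) (ξ 0) μ μ)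
    (hint : Integrable (fun ω => exp (-1 * ξ 0 ω)) μ) {C : ℕ}
    (hC : mgf (ξ 0) μ (-1) ^ C ≤ exp (-2)) :
    ∀ᵐ ω ∂μ, ∀ᶠ n : ℕ in atTop, (n : ℝ) + 1 < partialSum ξ (C * n) ω := by
  have hbound (n : ℕ) : μ.real {ω | partialSum ξ (C * n) ω ≤ (n : ℝ) + 1} ≤ exp 1 * exp (-n) :=
    calc _ ≤ exp (n + 1) * mgf (ξ 0) μ (-1) ^ #(range (C * n)) :=
          measureReal_sum_le_le_exp_mul_mgf_pow hmeas hindep hid hint _ _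
      _ ≤ exp (n + 1) * exp (-2) ^ n := by
          rw [card_range, pow_mul]
          gcongr
          exact pow_nonneg mgf_nonneg C
      _ = exp 1 * exp (-n) := by
          rw [← exp_nat_mul, ← exp_add, ← exp_add]
          ring_nf
  simpa only [Set.mem_ofPred_eq, not_le] using
    ae_eventually_notMem_of_measureReal_le (summable_exp_neg_nat.mul_left _) hbound

lemma ae_eventually_one_lt_sum_Ico (hmeas : ∀ i, Measurable (ξ i))
    (hindep : iIndepFun ξ μ) (hid : ∀ i, IdentDistrib (ξ i) (ξ 0) μ μ)
    (hint : Integrable (fun ω => exp (-1 * ξ 0 ω)) μ) (hρ1 : mgf (ξ 0) μ (-1) < 1)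
    {δ c : ℝ} (hδ : 0 < δ) (hc : 0 < c) (C : ℕ) :
    ∀ᵐ ω ∂μ, ∀ᶠ n : ℕ in atTop,
      ∀ k < C * n, 1 < ∑ i ∈ Ico k (k + ⌈c * (n : ℝ) ^ δ⌉₊), ξ i ω := by
  set ρ := mgf (ξ 0) μ (-1)
  have hρ0 : 0 < ρ := mgf_pos hint
  have hbound (n : ℕ) : μ.real (⋃ k ∈ range (C * n),
      {ω | ∑ i ∈ Ico k (k + ⌈c * (n : ℝ) ^ δ⌉₊), ξ i ω ≤ 1}) ≤
      C * exp 1 * (n * ρ ^ ⌈c * (n : ℝ) ^ δ⌉₊) :=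
    calc _ ≤ ∑ k ∈ range (C * n), exp 1 * ρ ^ ⌈c * (n : ℝ) ^ δ⌉₊ := by
          refine (measureReal_biUnion_finset_le _ _).trans (sum_le_sum fun k _ => ?_)
          simpa using measureReal_sum_le_le_exp_mul_mgf_pow hmeas hindep hid hint
            (Ico k (k + ⌈c * (n : ℝ) ^ δ⌉₊)) 1
      _ = C * exp 1 * (n * ρ ^ ⌈c * (n : ℝ) ^ δ⌉₊) := by
          rw [sum_const, card_range, nsmul_eq_mul]
          push_cast
          ring
  filter_upwards [ae_eventually_notMem_of_measureReal_le
    ((summable_natCast_mul_pow_ceil_mul_rpow hρ0 hρ1 hc hδ).mul_left _) hbound] with ω hω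
  filter_upwards [hω] with n hn k hk
  simpa using fun h => hn (Set.mem_biUnion (mem_range.2 hk) h)

lemma ae_eventually_renewalIncr_le (hmeas : ∀ i, Measurable (ξ i))
    (hpos : ∀ i, ∀ᵐ ω ∂μ, 0 < ξ i ω) (hindep : iIndepFun ξ μ)
    (hid : ∀ i, IdentDistrib (ξ i) (ξ 0) μ μ) {δ c : ℝ} (hδ : 0 < δ) (hc : 0 < c) :
    ∀ᵐ ω ∂μ, ∀ᶠ n : ℕ in atTop, ∀ j ≤ n, (renewalIncr ξ j ω).toReal ≤ ⌈c * (n : ℝ) ^ δ⌉₊ := by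
  have hint : Integrable (fun ω => exp (-1 * ξ 0 ω)) μ :=
    integrable_exp_mul_of_nonpos (hmeas 0).aemeasurable ((hpos 0).mono fun _ h => h.le)
      (by norm_num)
  have hρ1 : mgf (ξ 0) μ (-1) < 1 := mgf_lt_one (hmeas 0).aemeasurable (hpos 0) (by norm_num)
  obtain ⟨C, hC⟩ : ∃ C : ℕ, mgf (ξ 0) μ (-1) ^ C ≤ exp (-2) :=
    ((tendsto_pow_atTop_nhds_zero_of_lt_one mgf_nonneg hρ1).eventually
      (ge_mem_nhds (exp_pos _))).exists
  filter_upwards [ae_eventually_lt_partialSum hmeas hindep hid hint hC,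
    ae_eventually_one_lt_sum_Ico hmeas hindep hid hint hρ1 hδ hc C, ae_all_iff.2 hpos]
    with ω hS hblock hω
  filter_upwards [hS, hblock] with n hSn hblockn j hj
  have hjn : (j : ℝ) + 1 < partialSum ξ (C * n) ω := by
    have : (j : ℝ) ≤ n := by exact_mod_cast hj
    linarith
  exact ENNReal.toReal_le_of_le_ofReal (by positivity)
    (by simpa using renewalIncr_le_of_one_lt_sum_Ico hω hjn hblockn)

end IID

theorem stmt_6 {Ω : Type*} [MeasurableSpace Ω] (μ : Measure Ω) [IsProbabilityMeasure μ]
    (ξ : ℕ → Ω → ℝ) (hmeas : ∀ i, Measurable (ξ i))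
    (hpos : ∀ i, ∀ᵐ ω ∂μ, 0 < ξ i ω)
    (hindep : iIndepFun ξ μ)
    (hid : ∀ i, IdentDistrib (ξ i) (ξ 0) μ μ)
    (δ : ℝ) (hδ : 0 < δ) :
    ∀ᵐ ω ∂μ, Tendsto
      (fun n : ℕ => (n : ℝ) ^ (-δ) *
        (Finset.range (n + 1)).sup' (by simp) (fun j => (renewalIncr ξ j ω).toReal))
      atTop (nhds 0) := by
  filter_upwards [ae_all_iff.2 fun q : ℕ => ae_eventually_renewalIncr_le hmeas hpos hindep hid hδ
    (c := 1 / (q + 1)) (by positivity)] with ω hω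
  refine tendsto_rpow_neg_mul_of_eventually_le_ceil hδ
    (fun n => ENNReal.toReal_nonneg.trans
      (le_sup' (fun j => (renewalIncr ξ j ω).toReal) (self_mem_range_succ n))) fun q => ?_
  filter_upwards [hω q] with n hn
  exact sup'_le _ _ fun j hj => hn j (mem_range_succ_iff.1 hj)
end

section
/- Let ξ₁, ξ₂, … be i.i.d. strictly positive random variables with partial sums Sₙ, let ν(t) = #{k ≥ 0 : S_k ≤ t}, and let G : [0,∞) → [0,∞) be locally bounded. Then for every integer l ≥ 1, E[(Σ_{k≥0} G(t - S_k) 1{S_k ≤ t})^l] ≤ E[ν(1)^l] · (Σ_{j=0}^{⌊t⌋} sup_{y ∈ [j, j+1)} G(y))^l for all t ≥ 0. -/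
/-!
If `S_k ≤ t`, then `t - S_k` lies in `[j, j + 1)` for some `j ≤ ⌊t⌋`, so the shot-noise sum is at
most `∑ⱼ Mⱼ Nⱼ`, where `Mⱼ` is the supremum of `G` on `[j, j + 1)` and `Nⱼ` counts the partial sums
in `(t - j - 1, t - j]`. Convexity of `x ↦ x ^ l` (weighted Hölder) turns this into
`E (∑ⱼ Mⱼ Nⱼ) ^ l ≤ (∑ⱼ Mⱼ) ^ l · maxⱼ E Nⱼ ^ l`. Finally `E Nⱼ ^ l ≤ E ν(1) ^ l`: on the event that
`n` is the first index with `S_n > t - j - 1`, every partial sum in the interval is a partial sum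
of the walk restarted at time `n` lying in `[0, 1]`, and the restarted walk is independent of that
event and has the law of the original walk.
-/

open MeasureTheory ProbabilityTheory Filter Set
open scoped ENNReal

/-- `ν(t) = #{k ≥ 0 : S_k ≤ t}`, as an `ℝ≥0∞`-valued count. -/
noncomputable def renewalCount {Ω : Type*} (ξ : ℕ → Ω → ℝ) (t : ℝ) (ω : Ω) : ℝ≥0∞ :=
  ∑' k : ℕ, if partialSum ξ k ω ≤ t then (1 : ℝ≥0∞) else 0

/-- The shot-noise sum `∑_{k≥0} G(t - S_k) 1{S_k ≤ t}`, as an `ℝ≥0∞`-valued sum. -/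
noncomputable def shotSum {Ω : Type*} (G : ℝ → ℝ) (ξ : ℕ → Ω → ℝ) (t : ℝ) (ω : Ω) : ℝ≥0∞ :=
  ∑' k : ℕ, ENNReal.ofReal
    (if partialSum ξ k ω ≤ t then G (t - partialSum ξ k ω) else 0)


lemma ENNReal.sum_mul_pow_le {ι : Type*} (s : Finset ι) (w f : ι → ℝ≥0∞) {l : ℕ} (hl : l ≠ 0) :
    (∑ i ∈ s, w i * f i) ^ l ≤ (∑ i ∈ s, w i) ^ (l - 1) * ∑ i ∈ s, w i * f i ^ l := by
  have hl1 : 1 ≤ l := Nat.one_le_iff_ne_zero.2 hl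
  have hp : (1 : ℝ) ≤ l := by exact_mod_cast hl1
  have hp0 : (0 : ℝ) < l := by linarith
  have h := ENNReal.rpow_le_rpow (ENNReal.inner_le_weight_mul_Lp_of_nonneg s hp w f) hp0.le
  have hexp : (1 - (l : ℝ)⁻¹) * l = ((l - 1 : ℕ) : ℝ) := by
    rw [Nat.cast_sub hl1, sub_mul, inv_mul_cancel₀ hp0.ne']; simp
  rw [ENNReal.mul_rpow_of_nonneg _ _ hp0.le, ← ENNReal.rpow_mul, ← ENNReal.rpow_mul,
    inv_mul_cancel₀ hp0.ne', ENNReal.rpow_one, hexp] at h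
  simpa only [ENNReal.rpow_natCast] using h

lemma lintegral_sum_mul_pow_le {Ω ι : Type*} [MeasurableSpace Ω] {μ : Measure Ω} (s : Finset ι)
    (w : ι → ℝ≥0∞) {f : ι → Ω → ℝ≥0∞} (hf : ∀ i ∈ s, Measurable (f i)) {l : ℕ} (hl : l ≠ 0)
    {I : ℝ≥0∞}
    (hI : ∀ i ∈ s, ∫⁻ ω, f i ω ^ l ∂μ ≤ I) :
    ∫⁻ ω, (∑ i ∈ s, w i * f i ω) ^ l ∂μ ≤ (∑ i ∈ s, w i) ^ l * I := by
  have hmeas : ∀ i ∈ s, Measurable fun ω => w i * f i ω ^ l :=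
    fun i hi => ((hf i hi).pow_const l).const_mul _
  calc ∫⁻ ω, (∑ i ∈ s, w i * f i ω) ^ l ∂μ
      ≤ ∫⁻ ω, (∑ i ∈ s, w i) ^ (l - 1) * ∑ i ∈ s, w i * f i ω ^ l ∂μ :=
        lintegral_mono fun ω => ENNReal.sum_mul_pow_le s w (fun i => f i ω) hl
    _ = (∑ i ∈ s, w i) ^ (l - 1) * ∑ i ∈ s, w i * ∫⁻ ω, f i ω ^ l ∂μ := by
        rw [lintegral_const_mul _ (Finset.measurable_sum _ hmeas), lintegral_finsetSum _ hmeas]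
        refine congrArg _ (Finset.sum_congr rfl fun i hi => ?_)
        exact lintegral_const_mul _ ((hf i hi).pow_const l)
    _ ≤ (∑ i ∈ s, w i) ^ (l - 1) * ∑ i ∈ s, w i * I := by gcongr with i hi; exact hI i hi
    _ = (∑ i ∈ s, w i) ^ l * I := by rw [← Finset.sum_mul, ← mul_assoc, pow_sub_one_mul hl]

lemma bddAbove_image_Ico {G : ℝ → ℝ} (hGloc : ∀ b : ℝ, 0 ≤ b → ∃ M : ℝ, ∀ x ∈ Icc 0 b, G x ≤ M)
    (j : ℕ) : BddAbove (G '' Ico (j : ℝ) (j + 1)) := by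
  obtain ⟨M, hM⟩ := hGloc (j + 1) (by positivity)
  exact ⟨M, forall_mem_image.2 fun y hy => hM y ⟨(Nat.cast_nonneg j).trans hy.1, hy.2.le⟩⟩

section RandomWalk

open Function

variable {Ω : Type*} {ξ : ℕ → Ω → ℝ}

noncomputable def visitCount (ξ : ℕ → Ω → ℝ) (s : Set ℝ) (ω : Ω) : ℝ≥0∞ :=
  ∑' k, s.indicator 1 (partialSum ξ k ω)

def firstPassage (ξ : ℕ → Ω → ℝ) (a : ℝ) (n : ℕ) : Set Ω :=
  {ω | a < partialSum ξ n ω ∧ ∀ j < n, partialSum ξ j ω ≤ a}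

lemma renewalCount_eq_visitCount (t : ℝ) : renewalCount ξ t = visitCount ξ (Iic t) := by
  ext ω
  simp only [renewalCount, visitCount, Set.indicator_apply, mem_Iic, Pi.one_apply]

lemma partialSum_add (n m : ℕ) (ω : Ω) :
    partialSum ξ (m + n) ω = partialSum ξ n ω + partialSum (fun i => ξ (n + i)) m ω := by
  rw [add_comm]
  exact Finset.sum_range_add _ n m

lemma pairwise_disjoint_firstPassage (a : ℝ) : Pairwise (Disjoint on firstPassage ξ a) :=
  (pairwise_disjoint_on _).2 fun n _ hnm =>
    Set.disjoint_left.2 fun _ hn hm => (hm.2 n hnm).not_gt hn.1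

lemma exists_mem_firstPassage {a : ℝ} {ω : Ω} (h : ∃ k, a < partialSum ξ k ω) :
    ∃ n, ω ∈ firstPassage ξ a n :=
  ⟨Nat.find h, Nat.find_spec h, fun _ hj => not_lt.1 (Nat.find_min h hj)⟩

lemma visitCount_Ioc_le_renewalCount_shift {b : ℝ} {n : ℕ} {ω : Ω}
    (hω : ω ∈ firstPassage ξ (b - 1) n) :
    visitCount ξ (Ioc (b - 1) b) ω ≤ renewalCount (fun i => ξ (n + i)) 1 ω := by
  have hbefore :
      ∑ k ∈ Finset.range n, (Ioc (b - 1) b).indicator (1 : ℝ → ℝ≥0∞) (partialSum ξ k ω) = 0 :=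
    Finset.sum_eq_zero fun k hk =>
      indicator_of_notMem (fun hS => (hω.2 k (Finset.mem_range.1 hk)).not_gt hS.1) _
  rw [visitCount, ← ENNReal.summable.sum_add_tsum_nat_add' (k := n), hbefore, zero_add,
    renewalCount_eq_visitCount]
  refine ENNReal.tsum_le_tsum fun m => ?_
  by_cases hm : partialSum ξ (m + n) ω ∈ Ioc (b - 1) b
  · have hshift : partialSum (fun i => ξ (n + i)) m ω ∈ Iic 1 :=
      mem_Iic.2 (by linarith [partialSum_add (ξ := ξ) n m ω, hm.2, hω.1])
    simp [indicator_of_mem hm, indicator_of_mem hshift]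
  · simp [indicator_of_notMem hm]

section Measurability

variable {m : MeasurableSpace Ω}

lemma measurable_partialSum {n : ℕ} (h : ∀ i < n, Measurable[m] (ξ i)) :
    Measurable[m] (partialSum ξ n) :=
  Finset.measurable_sum _ fun i hi => h i (Finset.mem_range.1 hi)

lemma measurable_visitCount (h : ∀ i, Measurable[m] (ξ i)) {s : Set ℝ} (hs : MeasurableSet s) :
    Measurable[m] (visitCount ξ s) :=
  Measurable.tsum fun _ =>
    (measurable_one.indicator hs).comp (measurable_partialSum fun i _ => h i)

lemma measurable_renewalCount (h : ∀ i, Measurable[m] (ξ i)) (t : ℝ) :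
    Measurable[m] (renewalCount ξ t) := by
  rw [renewalCount_eq_visitCount]
  exact measurable_visitCount h measurableSet_Iic

lemma measurableSet_firstPassage {n : ℕ} (h : ∀ i < n, Measurable[m] (ξ i)) (a : ℝ) :
    MeasurableSet[m] (firstPassage ξ a n) := by
  have hS : ∀ j ≤ n, Measurable[m] (partialSum ξ j) :=
    fun j hj => measurable_partialSum fun i hi => h i (by omega)
  have hset : firstPassage ξ a n =
      {ω | a < partialSum ξ n ω} ∩ ⋂ j ∈ Finset.range n, {ω | partialSum ξ j ω ≤ a} := by
    ext ω; simp [firstPassage]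
  rw [hset]
  exact (measurableSet_lt measurable_const (hS n le_rfl)).inter <| Finset.measurableSet_biInter _
    fun j hj => measurableSet_le (hS j (Finset.mem_range.1 hj).le) measurable_const

end Measurability

section Probability

variable [MeasurableSpace Ω] {μ : Measure Ω}

lemma identDistrib_shift (hmeas : ∀ i, Measurable (ξ i)) (hindep : iIndepFun ξ μ)
    (hid : ∀ i, IdentDistrib (ξ i) (ξ 0) μ μ) (n : ℕ) :
    IdentDistrib (fun ω i => ξ (n + i) ω) (fun ω i => ξ i ω) μ μ where
  aemeasurable_fst := (measurable_pi_lambda _ fun i => hmeas _).aemeasurable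
  aemeasurable_snd := (measurable_pi_lambda _ hmeas).aemeasurable
  map_eq := by
    rw [(hindep.precomp (add_right_injective n)).map_fun_eq_infinitePi_map (fun i => hmeas _),
      hindep.map_fun_eq_infinitePi_map hmeas]
    congr 1
    funext i
    rw [(hid (n + i)).map_eq, (hid i).map_eq]

lemma lintegral_renewalCount_shift_pow (hmeas : ∀ i, Measurable (ξ i)) (hindep : iIndepFun ξ μ)
    (hid : ∀ i, IdentDistrib (ξ i) (ξ 0) μ μ)
    (n l : ℕ) (t : ℝ) :
    ∫⁻ ω, renewalCount (fun i => ξ (n + i)) t ω ^ l ∂μ = ∫⁻ ω, renewalCount ξ t ω ^ l ∂μ := by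
  have hΦ : Measurable fun x : ℕ → ℝ => renewalCount (fun i x => x i) t x ^ l :=
    (measurable_renewalCount measurable_pi_apply t).pow_const l
  exact ((identDistrib_shift hmeas hindep hid n).comp hΦ).lintegral_eq

lemma lintegral_indicator_firstPassage_mul (hmeas : ∀ i, Measurable (ξ i))
    (hindep : iIndepFun ξ μ) (a t : ℝ) (n l : ℕ) :
    ∫⁻ ω, (firstPassage ξ a n).indicator 1 ω * renewalCount (fun i => ξ (n + i)) t ω ^ l ∂μ
      = μ (firstPassage ξ a n) * ∫⁻ ω, renewalCount (fun i => ξ (n + i)) t ω ^ l ∂μ := by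
  set m : ℕ → MeasurableSpace Ω := fun i => MeasurableSpace.comap (ξ i) inferInstance
  have hle : ∀ i, m i ≤ ‹MeasurableSpace Ω› := fun i => (hmeas i).comap_le
  have hm : ∀ {s : Set ℕ} {i : ℕ}, i ∈ s → Measurable[⨆ j ∈ s, m j] (ξ i) := fun hi =>
    (comap_measurable _).mono (le_iSup₂ (f := fun j (_ : j ∈ _) => m j) _ hi) le_rfl
  have hind := indep_iSup_of_disjoint hle ((iIndepFun_iff_iIndep _ _ _).1 hindep)
    (Set.Iio_disjoint_Ici le_rfl : Disjoint (Iio n) (Ici n))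
  have hpast : Measurable[⨆ i ∈ Iio n, m i] ((firstPassage ξ a n).indicator (1 : Ω → ℝ≥0∞)) :=
    measurable_const.indicator (measurableSet_firstPassage (fun i hi => hm hi) a)
  have hfuture : Measurable[⨆ i ∈ Ici n, m i]
      fun ω => renewalCount (fun i => ξ (n + i)) t ω ^ l :=
    (measurable_renewalCount (fun i => hm (le_add_right le_rfl : n ≤ n + i)) t).pow_const l
  rw [lintegral_mul_eq_lintegral_mul_lintegral_of_independent_measurableSpace
      (iSup₂_le fun i _ => hle i) (iSup₂_le fun i _ => hle i) hind hpast hfuture,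
    lintegral_indicator_one (measurableSet_firstPassage (fun i _ => hmeas i) a)]

lemma lintegral_visitCount_Ioc_pow_le [IsProbabilityMeasure μ] (hmeas : ∀ i, Measurable (ξ i))
    (hindep : iIndepFun ξ μ) (hid : ∀ i, IdentDistrib (ξ i) (ξ 0) μ μ) {l : ℕ} (hl : l ≠ 0)
    (b : ℝ) :
    ∫⁻ ω, visitCount ξ (Ioc (b - 1) b) ω ^ l ∂μ ≤ ∫⁻ ω, renewalCount ξ 1 ω ^ l ∂μ := by
  set E := firstPassage ξ (b - 1)
  set R : ℕ → Ω → ℝ≥0∞ := fun n ω => renewalCount (fun i => ξ (n + i)) 1 ω ^ l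
  have hE : ∀ n, MeasurableSet (E n) := fun n => measurableSet_firstPassage (fun i _ => hmeas i) _
  have hR : ∀ n, Measurable (R n) := fun n =>
    (measurable_renewalCount (fun i => hmeas (n + i)) 1).pow_const l
  have hpt : ∀ ω, visitCount ξ (Ioc (b - 1) b) ω ^ l ≤ ∑' n, (E n).indicator 1 ω * R n ω := by
    intro ω
    by_cases h : ∃ k, b - 1 < partialSum ξ k ω
    · obtain ⟨n, hn⟩ := exists_mem_firstPassage h
      calc visitCount ξ (Ioc (b - 1) b) ω ^ l ≤ R n ω :=
            pow_le_pow_left' (visitCount_Ioc_le_renewalCount_shift hn) l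
        _ = (E n).indicator 1 ω * R n ω := by rw [indicator_of_mem hn, Pi.one_apply, one_mul]
        _ ≤ _ := ENNReal.le_tsum n
    · simp only [not_exists, not_lt] at h
      have : visitCount ξ (Ioc (b - 1) b) ω = 0 :=
        ENNReal.tsum_eq_zero.2 fun k => indicator_of_notMem (fun hk => (h k).not_gt hk.1) _
      simp [this, hl]
  calc ∫⁻ ω, visitCount ξ (Ioc (b - 1) b) ω ^ l ∂μ
      ≤ ∫⁻ ω, ∑' n, (E n).indicator 1 ω * R n ω ∂μ := lintegral_mono hpt
    _ = ∑' n, μ (E n) * ∫⁻ ω, renewalCount ξ 1 ω ^ l ∂μ := by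
        rw [lintegral_tsum (f := fun n ω => (E n).indicator 1 ω * R n ω)
          fun n => ((measurable_one.indicator (hE n)).mul (hR n)).aemeasurable]
        congr 1
        funext n
        rw [lintegral_indicator_firstPassage_mul hmeas hindep,
          lintegral_renewalCount_shift_pow hmeas hindep hid]
    _ = μ (⋃ n, E n) * ∫⁻ ω, renewalCount ξ 1 ω ^ l ∂μ := by
        rw [ENNReal.tsum_mul_right, measure_iUnion (pairwise_disjoint_firstPassage _) hE]
    _ ≤ ∫⁻ ω, renewalCount ξ 1 ω ^ l ∂μ := mul_le_of_le_one_left' prob_le_one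

end Probability

section ShotNoise

variable {G : ℝ → ℝ} {M : ℕ → ℝ}

lemma ofReal_le_sum_mul_indicator_Ioc (hGM : ∀ j : ℕ, ∀ y ∈ Ico (j : ℝ) (j + 1), G y ≤ M j)
    {t x : ℝ} (hx : 0 ≤ x) (hxt : x ≤ t) :
    ENNReal.ofReal (G (t - x)) ≤ ∑ j ∈ Finset.range (⌊t⌋₊ + 1),
      ENNReal.ofReal (M j) * (Ioc (t - j - 1) (t - j)).indicator 1 x := by
  set j := ⌊t - x⌋₊
  have hj : j ∈ Finset.range (⌊t⌋₊ + 1) :=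
    Finset.mem_range_succ_iff.2 (Nat.floor_le_floor (by linarith))
  have hy : t - x ∈ Ico (j : ℝ) (j + 1) := ⟨Nat.floor_le (by linarith), Nat.lt_floor_add_one _⟩
  have hxj : x ∈ Ioc (t - j - 1) (t - j) := ⟨by linarith [hy.2], by linarith [hy.1]⟩
  calc ENNReal.ofReal (G (t - x)) ≤ ENNReal.ofReal (M j) := ENNReal.ofReal_le_ofReal (hGM j _ hy)
    _ = ENNReal.ofReal (M j) * (Ioc (t - j - 1) (t - j)).indicator 1 x := by
        rw [indicator_of_mem hxj, Pi.one_apply, mul_one]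
    _ ≤ _ := Finset.single_le_sum (f := fun j : ℕ =>
        ENNReal.ofReal (M j) * (Ioc (t - j - 1) (t - j)).indicator 1 x) (fun _ _ => zero_le) hj

lemma shotSum_le_sum_mul_visitCount (hGM : ∀ j : ℕ, ∀ y ∈ Ico (j : ℝ) (j + 1), G y ≤ M j)
    {t : ℝ} {ω : Ω} (hS : ∀ k, 0 ≤ partialSum ξ k ω) :
    shotSum G ξ t ω ≤ ∑ j ∈ Finset.range (⌊t⌋₊ + 1),
      ENNReal.ofReal (M j) * visitCount ξ (Ioc (t - j - 1) (t - j)) ω := by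
  simp only [visitCount, ← ENNReal.tsum_mul_left]
  rw [← Summable.tsum_finsetSum fun _ _ => ENNReal.summable]
  refine ENNReal.tsum_le_tsum fun k => ?_
  split_ifs with hk
  · exact ofReal_le_sum_mul_indicator_Ioc hGM (hS k) hk
  · simp

end ShotNoise

end RandomWalk

theorem stmt_8_general {Ω : Type*} [MeasurableSpace Ω] (μ : Measure Ω) [IsProbabilityMeasure μ]
    (ξ : ℕ → Ω → ℝ) (hmeas : ∀ i, Measurable (ξ i))
    (hpos : ∀ i, ∀ᵐ ω ∂μ, 0 < ξ i ω)
    (hindep : iIndepFun ξ μ)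
    (hid : ∀ i, IdentDistrib (ξ i) (ξ 0) μ μ)
    (G : ℝ → ℝ) (hG0 : ∀ x, 0 ≤ G x)
    (hGloc : ∀ b : ℝ, 0 ≤ b → ∃ M : ℝ, ∀ x ∈ Icc 0 b, G x ≤ M)
    (l : ℕ) (t : ℝ) :
    (∫⁻ ω, (shotSum G ξ t ω) ^ l ∂μ)
      ≤ (∫⁻ ω, (renewalCount ξ 1 ω) ^ l ∂μ) *
        ENNReal.ofReal
          ((∑ j ∈ Finset.range (⌊t⌋₊ + 1), sSup (G '' Ico (j : ℝ) ((j : ℝ) + 1))) ^ l) := by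
  rcases eq_or_ne l 0 with rfl | hl
  · simp
  set M : ℕ → ℝ := fun j => sSup (G '' Ico (j : ℝ) (j + 1))
  have hGM : ∀ j : ℕ, ∀ y ∈ Ico (j : ℝ) (j + 1), G y ≤ M j := fun j y hy =>
    le_csSup (bddAbove_image_Ico hGloc j) (mem_image_of_mem G hy)
  have hM0 : ∀ j ∈ Finset.range (⌊t⌋₊ + 1), 0 ≤ M j := fun j _ =>
    (hG0 j).trans (hGM j j ⟨le_rfl, lt_add_one _⟩)
  have hS0 : ∀ᵐ ω ∂μ, ∀ k, 0 ≤ partialSum ξ k ω :=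
    (ae_all_iff.2 hpos).mono fun ω hω k => Finset.sum_nonneg fun i _ => (hω i).le
  calc ∫⁻ ω, shotSum G ξ t ω ^ l ∂μ
      ≤ ∫⁻ ω, (∑ j ∈ Finset.range (⌊t⌋₊ + 1),
          ENNReal.ofReal (M j) * visitCount ξ (Ioc (t - j - 1) (t - j)) ω) ^ l ∂μ :=
        lintegral_mono_ae <| hS0.mono fun ω hω =>
          pow_le_pow_left' (shotSum_le_sum_mul_visitCount hGM hω) l
    _ ≤ (∑ j ∈ Finset.range (⌊t⌋₊ + 1), ENNReal.ofReal (M j)) ^ l *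
          ∫⁻ ω, renewalCount ξ 1 ω ^ l ∂μ :=
        lintegral_sum_mul_pow_le _ _ (fun j _ => measurable_visitCount hmeas measurableSet_Ioc) hl
          fun j _ => lintegral_visitCount_Ioc_pow_le hmeas hindep hid hl (t - j)
    _ = _ := by
        rw [mul_comm, ← ENNReal.ofReal_sum_of_nonneg hM0,
          ← ENNReal.ofReal_pow (Finset.sum_nonneg hM0)]

theorem stmt_8 {Ω : Type*} [MeasurableSpace Ω] (μ : Measure Ω) [IsProbabilityMeasure μ]
    (ξ : ℕ → Ω → ℝ) (hmeas : ∀ i, Measurable (ξ i))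
    (hpos : ∀ i, ∀ᵐ ω ∂μ, 0 < ξ i ω)
    (hindep : iIndepFun ξ μ)
    (hid : ∀ i, IdentDistrib (ξ i) (ξ 0) μ μ)
    (G : ℝ → ℝ) (hG0 : ∀ x, 0 ≤ G x)
    (hGloc : ∀ b : ℝ, 0 ≤ b → ∃ M : ℝ, ∀ x ∈ Icc 0 b, G x ≤ M)
    (l : ℕ) (hl : 1 ≤ l) (t : ℝ) (ht : 0 ≤ t) :
    (∫⁻ ω, (shotSum G ξ t ω) ^ l ∂μ)
      ≤ (∫⁻ ω, (renewalCount ξ 1 ω) ^ l ∂μ) *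
        ENNReal.ofReal
          ((∑ j ∈ Finset.range (⌊t⌋₊ + 1), sSup (G '' Ico (j : ℝ) ((j : ℝ) + 1))) ^ l) :=
  stmt_8_general μ ξ hmeas hpos hindep hid G hG0 hGloc l t
end
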